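/- With Ω, v, g and the convex envelope Γ as in the context, set M := sup_{closure(Ω)} v⁻ and assume M > 0. Then for every w ∈ ℝ^d with |w| ≤ M/(2R) there exists a contact point y ∈ closure(B_R), i.e. a point with Γ(y) = g(y), such that w ∈ ∂Γ(y). In other words, the closed ball of radius M/(2R) centered at the origin of ℝ^d is contained in the union of the subdifferentials ∂Γ(y) over all contact points y. -/
import Mathlib


open Set Metric MeasureTheory Filter
open scoped RealInnerProductSpace

noncomputable section

/-- The convex envelope `Γ(x) = sup { L(x) : L affine, L ≤ g on closedBall 0 R }`. -/
def Gam {d : ℕ} (R : ℝ) (g : EuclideanSpace ℝ (Fin d) → ℝ)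
    (x : EuclideanSpace ℝ (Fin d)) : ℝ :=
  sSup {r : ℝ | ∃ (w : EuclideanSpace ℝ (Fin d)) (c : ℝ),
    (∀ z ∈ Metric.closedBall (0 : EuclideanSpace ℝ (Fin d)) R, ⟪w, z⟫ + c ≤ g z) ∧
      r = ⟪w, x⟫ + c}

/-- The subdifferential of a function `Γ` on `closedBall 0 R` at a point `y`:
`∂Γ(y) = { w : Γ(x) ≥ Γ(y) + ⟨w, x − y⟩ for all x ∈ closedBall 0 R }`. -/
def subdiffAt {d : ℕ} (R : ℝ) (Γ : EuclideanSpace ℝ (Fin d) → ℝ)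
    (y : EuclideanSpace ℝ (Fin d)) : Set (EuclideanSpace ℝ (Fin d)) :=
  { w | ∀ x ∈ Metric.closedBall (0 : EuclideanSpace ℝ (Fin d)) R,
      Γ y + ⟪w, x - y⟫ ≤ Γ x }

/-- **Small subgradients are attained at contact points.**
With `M := sup_{closure Ω} v⁻ > 0`, every `w` with `|w| ≤ M/(2R)` belongs to `∂Γ(y)` for
some contact point `y ∈ closedBall 0 R` (i.e. `Γ(y) = g(y)`). -/
theorem stmt_11 (d : ℕ) (hd : 1 ≤ d) (R : ℝ) (hR : 0 < R)
    (Ω : Set (EuclideanSpace ℝ (Fin d))) (hΩo : IsOpen Ω)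
    (hΩb : Bornology.IsBounded Ω)
    (hΩR : closure Ω ⊆ Metric.ball (0 : EuclideanSpace ℝ (Fin d)) R)
    (v : EuclideanSpace ℝ (Fin d) → ℝ) (hv : ContinuousOn v (closure Ω))
    (hv_bdry : ∀ x ∈ frontier Ω, 0 ≤ v x)
    (g : EuclideanSpace ℝ (Fin d) → ℝ)
    (hg_cont : ContinuousOn g (Metric.closedBall 0 R))
    (hg₁ : ∀ x ∈ closure Ω, g x = -(max (-(v x)) 0))
    (hg₂ : ∀ x ∈ Metric.closedBall (0 : EuclideanSpace ℝ (Fin d)) R \ Ω, g x = 0)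
    (M : ℝ) (hM_def : M = sSup ((fun x => max (-(v x)) 0) '' closure Ω)) (hM : 0 < M) :
    ∀ w : EuclideanSpace ℝ (Fin d), ‖w‖ ≤ M / (2 * R) →
      ∃ y ∈ Metric.closedBall (0 : EuclideanSpace ℝ (Fin d)) R,
        Gam R g y = g y ∧ w ∈ subdiffAt R (Gam R g) y := by
  intro w hw
  set B := Metric.closedBall (0 : EuclideanSpace ℝ (Fin d)) R with hB
  have hBc : IsCompact B := isCompact_closedBall _ _
  have hBne : B.Nonempty := ⟨0, by simp [hB, le_of_lt hR]⟩
  have hfc : ContinuousOn (fun z => g z - ⟪w, z⟫) B :=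
    hg_cont.sub (Continuous.continuousOn (continuous_const.inner continuous_id))
  obtain ⟨y, hyB, hmin⟩ := hBc.exists_isMinOn hBne hfc
  set c : ℝ := g y - ⟪w, y⟫ with hc
  have hadm : ∀ z ∈ B, ⟪w, z⟫ + c ≤ g z := by
    intro z hz
    have := hmin hz
    simp only [Set.mem_setOf_eq, hc] at this ⊢
    linarith
  -- boundedness and membership of the sSup set
  have hbdd : ∀ x ∈ B, BddAbove {r : ℝ | ∃ (w' : EuclideanSpace ℝ (Fin d)) (c' : ℝ),
      (∀ z ∈ B, ⟪w', z⟫ + c' ≤ g z) ∧ r = ⟪w', x⟫ + c'} := by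
    intro x hx
    refine ⟨g x, ?_⟩
    rintro r ⟨w', c', h, rfl⟩
    exact h x hx
  have hmem : ∀ x, (⟪w, x⟫ + c) ∈ {r : ℝ | ∃ (w' : EuclideanSpace ℝ (Fin d)) (c' : ℝ),
      (∀ z ∈ B, ⟪w', z⟫ + c' ≤ g z) ∧ r = ⟪w', x⟫ + c'} := fun x => ⟨w, c, hadm, rfl⟩
  have hGle : ∀ x ∈ B, ⟪w, x⟫ + c ≤ Gam R g x := fun x hx =>
    le_csSup (hbdd x hx) (hmem x)
  have hGam_eq : Gam R g y = g y := by
    apply le_antisymm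
    · exact csSup_le ⟨_, hmem y⟩ (by rintro r ⟨w', c', h, rfl⟩; exact h y hyB)
    · have := hGle y hyB
      simp only [hc] at this
      linarith
  refine ⟨y, hyB, hGam_eq, ?_⟩
  intro x hx
  have h1 := hGle x hx
  rw [hGam_eq, inner_sub_right]
  simp only [hc] at h1 ⊢
  linarith

end
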